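/- arXiv:1304.3184 — 2 statements merged into one kernel-verified Lean document; each statement's English description precedes it below -/
import Mathlib

section
/- The map Ψ(x,y) = (cos x sin y, cos x cos y, sin x cos y, sin x sin y) takes values in the set {p ∈ S³ : p₁p₃ = p₂p₄}, and its image is exactly this set. -/
open Real

def sphere3 : Set (Fin 4 → ℝ) := {p | ∑ i, p i ^ 2 = 1}

/-- The doubly ruled parametrization of the Clifford torus. -/
noncomputable def Psi (x y : ℝ) : Fin 4 → ℝ :=
  ![Real.cos x * Real.sin y, Real.cos x * Real.cos y,
    Real.sin x * Real.cos y, Real.sin x * Real.sin y]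

/-- The Clifford torus in the rotated coordinates: p₁p₃ = p₂p₄. -/
def cliffordT' : Set (Fin 4 → ℝ) := {p ∈ sphere3 | p 0 * p 2 = p 1 * p 3}

lemma exists_polar (a b : ℝ) : ∃ r θ : ℝ, a = r * cos θ ∧ b = r * sin θ :=
  ⟨‖(⟨a, b⟩ : ℂ)‖, Complex.arg ⟨a, b⟩,
    (Complex.norm_mul_cos_arg ⟨a, b⟩).symm, (Complex.norm_mul_sin_arg ⟨a, b⟩).symm⟩

lemma exists_cos_sin_eq {a b : ℝ} (h : a ^ 2 + b ^ 2 = 1) :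
    ∃ θ : ℝ, cos θ = a ∧ sin θ = b := by
  have hnorm : ‖(⟨a, b⟩ : ℂ)‖ = 1 := by
    rw [← pow_eq_one_iff_of_nonneg (norm_nonneg _) two_ne_zero, Complex.sq_norm,
      Complex.normSq_mk]
    linarith
  refine ⟨Complex.arg ⟨a, b⟩, ?_, ?_⟩
  · simpa [hnorm] using Complex.norm_mul_cos_arg ⟨a, b⟩
  · simpa [hnorm] using Complex.norm_mul_sin_arg ⟨a, b⟩

lemma exists_common_direction {a b c d : ℝ} (h : a * d = b * c) :
    ∃ r s θ : ℝ, a = r * cos θ ∧ b = r * sin θ ∧ c = s * cos θ ∧ d = s * sin θ := by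
  obtain ⟨r, θ, rfl, rfl⟩ := exists_polar a b
  rcases eq_or_ne r 0 with rfl | hr
  · obtain ⟨s, φ, rfl, rfl⟩ := exists_polar c d
    exact ⟨0, s, φ, by simp, by simp, rfl, rfl⟩
  · have hpar : d * cos θ = c * sin θ := mul_left_cancel₀ hr (by linear_combination h)
    refine ⟨r, c * cos θ + d * sin θ, θ, rfl, rfl, ?_, ?_⟩
    · linear_combination (-sin θ) * hpar - c * sin_sq_add_cos_sq θ
    · linear_combination cos θ * hpar - d * sin_sq_add_cos_sq θ

lemma mem_sphere3_iff {p : Fin 4 → ℝ} :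
    p ∈ sphere3 ↔ p 0 ^ 2 + p 1 ^ 2 + p 2 ^ 2 + p 3 ^ 2 = 1 := by
  simp only [sphere3, Set.mem_ofPred_eq, Fin.sum_univ_four]

lemma Psi_mem_cliffordT' (x y : ℝ) : Psi x y ∈ cliffordT' := by
  refine ⟨mem_sphere3_iff.2 ?_, ?_⟩ <;> simp only [Psi, Matrix.cons_val]
  · linear_combination cos x ^ 2 * sin_sq_add_cos_sq y + sin x ^ 2 * sin_sq_add_cos_sq y +
      sin_sq_add_cos_sq x
  · ring

/-- `(p₁, p₀)` and `(p₂, p₃)` are parallel, so both are multiples `r, s` of one unit vector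
`(cos y, sin y)`; then `r² + s² = 1` gives `(r, s) = (cos x, sin x)`. -/
lemma cliffordT'_subset_range_Psi :
    cliffordT' ⊆ Set.range (fun z : ℝ × ℝ => Psi z.1 z.2) := by
  rintro p ⟨hsphere, hprod⟩
  obtain ⟨r, s, y, h1, h0, h2, h3⟩ := exists_common_direction (a := p 1) (b := p 0) (c := p 2)
    (d := p 3) (by linear_combination -hprod)
  have hrs : r ^ 2 + s ^ 2 = 1 := by
    rw [mem_sphere3_iff, h0, h1, h2, h3] at hsphere
    linear_combination hsphere - (r ^ 2 + s ^ 2) * sin_sq_add_cos_sq y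
  obtain ⟨x, rfl, rfl⟩ := exists_cos_sin_eq hrs
  refine ⟨(x, y), funext fun i => ?_⟩
  fin_cases i <;> simp [Psi, h0, h1, h2, h3, mul_comm]

theorem stmt_3 :
    (∀ x y : ℝ, Psi x y ∈ cliffordT') ∧
    Set.range (fun z : ℝ × ℝ => Psi z.1 z.2) = cliffordT' := by
  refine ⟨Psi_mem_cliffordT', Set.Subset.antisymm ?_ cliffordT'_subset_range_Psi⟩
  exact Set.range_subset_iff.2 fun z => Psi_mem_cliffordT' z.1 z.2
end

section
/- Let T₁ = {p ∈ S³ : p₁p₃ = p₂p₄} and T_j = ρ₃₄^{(j−1)π/m}(T₁) for j = 1,…,m. Then T₁ ∩ ⋯ ∩ T_m = C₁₂ ∪ C₃₄, i.e., the common intersection of all m tori is exactly the union of the great circle in the x₁x₂-plane and the great circle in the x₃x₄-plane. -/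
/-!
Write `z = p₀ + i p₁` and `w = p₂ + i p₃`. The rotation `ρ₃₄^t` multiplies `w` by `e^{it}` and
`T₁` is `S³ ∩ {Re (z w) = 0}`, so `ρ₃₄^t (T₁) = S³ ∩ {Re (e^{-it} z w) = 0}`. The tori for
`t = 0` and `t = π / m` (where `sin t ≠ 0` as `m ≥ 2`) already force `z w = 0`, i.e. `z = 0` or
`w = 0` on `S³`, which is `C₃₄ ∪ C₁₂`; conversely `z w = 0` lies on every rotated torus.
-/

open Real

noncomputable def rho34 (t : ℝ) (p : Fin 4 → ℝ) : Fin 4 → ℝ :=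
  ![p 0, p 1, p 2 * Real.cos t - p 3 * Real.sin t, p 2 * Real.sin t + p 3 * Real.cos t]

def C12 : Set (Fin 4 → ℝ) := {p | p 0 ^ 2 + p 1 ^ 2 = 1 ∧ p 2 = 0 ∧ p 3 = 0}

def C34 : Set (Fin 4 → ℝ) := {p | p 0 = 0 ∧ p 1 = 0 ∧ p 2 ^ 2 + p 3 ^ 2 = 1}

@[simp] lemma rho34_apply_zero (t : ℝ) (p : Fin 4 → ℝ) : rho34 t p 0 = p 0 := rfl

@[simp] lemma rho34_apply_one (t : ℝ) (p : Fin 4 → ℝ) : rho34 t p 1 = p 1 := rfl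

@[simp] lemma rho34_apply_two (t : ℝ) (p : Fin 4 → ℝ) :
    rho34 t p 2 = p 2 * cos t - p 3 * sin t := rfl

@[simp] lemma rho34_apply_three (t : ℝ) (p : Fin 4 → ℝ) :
    rho34 t p 3 = p 2 * sin t + p 3 * cos t := rfl

lemma rho34_rho34 (s t : ℝ) (p : Fin 4 → ℝ) : rho34 s (rho34 t p) = rho34 (s + t) p := by
  ext i
  fin_cases i <;> simp [cos_add, sin_add] <;> ring

lemma rho34_zero (p : Fin 4 → ℝ) : rho34 0 p = p := by
  ext i
  fin_cases i <;> simp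

lemma image_rho34 (t : ℝ) : Set.image (rho34 t) = Set.preimage (rho34 (-t)) :=
  Set.image_eq_preimage_of_inverse (f := rho34 t) (g := rho34 (-t))
    (fun p => by rw [rho34_rho34, neg_add_cancel, rho34_zero])
    (fun p => by rw [rho34_rho34, add_neg_cancel, rho34_zero])

lemma rho34_mem_sphere3_iff (t : ℝ) (p : Fin 4 → ℝ) : rho34 t p ∈ sphere3 ↔ p ∈ sphere3 := by
  have hsum : ∑ i, rho34 t p i ^ 2 = ∑ i, p i ^ 2 := by
    simp only [Fin.sum_univ_four, rho34_apply_zero, rho34_apply_one, rho34_apply_two,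
      rho34_apply_three]
    linear_combination (p 2 ^ 2 + p 3 ^ 2) * sin_sq_add_cos_sq t
  simp only [sphere3, Set.mem_ofPred_eq, hsum]

lemma mem_rho34_image_cliffordT'_iff (t : ℝ) (p : Fin 4 → ℝ) :
    p ∈ rho34 t '' cliffordT' ↔
      p ∈ sphere3 ∧ cos t * (p 0 * p 2 - p 1 * p 3) + sin t * (p 0 * p 3 + p 1 * p 2) = 0 := by
  rw [image_rho34, Set.mem_preimage, cliffordT', Set.mem_ofPred_eq, rho34_mem_sphere3_iff]
  refine and_congr_right fun _ => ?_
  simp only [rho34_apply_zero, rho34_apply_one, rho34_apply_two, rho34_apply_three, cos_neg,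
    sin_neg]
  constructor <;> intro h <;> linear_combination h

lemma mem_C12_union_C34_iff (p : Fin 4 → ℝ) :
    p ∈ C12 ∪ C34 ↔ p ∈ sphere3 ∧ p 0 * p 2 - p 1 * p 3 = 0 ∧ p 0 * p 3 + p 1 * p 2 = 0 := by
  simp only [C12, C34, sphere3, Set.mem_union, Set.mem_ofPred_eq, Fin.sum_univ_four]
  constructor
  · rintro (⟨h01, h2, h3⟩ | ⟨h0, h1, h23⟩)
    · simp [h2, h3, h01]
    · simp [h0, h1, h23]
  · rintro ⟨hsum, hre, him⟩
    -- `|z w|² = |z|² |w|²`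
    have hprod : (p 0 ^ 2 + p 1 ^ 2) * (p 2 ^ 2 + p 3 ^ 2) = 0 := by
      linear_combination (p 0 * p 2 - p 1 * p 3) * hre + (p 0 * p 3 + p 1 * p 2) * him
    rcases mul_eq_zero.1 hprod with hz | hw
    · have h0 : p 0 = 0 := by nlinarith
      have h1 : p 1 = 0 := by nlinarith
      exact Or.inr ⟨h0, h1, by linarith⟩
    · have h2 : p 2 = 0 := by nlinarith
      have h3 : p 3 = 0 := by nlinarith
      exact Or.inl ⟨by linarith, h2, h3⟩

theorem stmt_17 (m : ℕ) (hm : 2 ≤ m) :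
    (⋂ j ∈ Finset.range m, rho34 (j * π / m) '' cliffordT') = C12 ∪ C34 := by
  have hsin : sin (π / m) ≠ 0 := by
    have hm' : (1 : ℝ) < m := by exact_mod_cast hm
    exact (sin_pos_of_pos_of_lt_pi (by positivity) (div_lt_self pi_pos hm')).ne'
  ext p
  simp only [Set.mem_iInter, Finset.mem_range, mem_rho34_image_cliffordT'_iff,
    mem_C12_union_C34_iff]
  constructor
  · intro h
    obtain ⟨hp, hre⟩ := h 0 (by omega)
    have him := (h 1 (by omega)).2
    simp only [CharP.cast_eq_zero, zero_mul, zero_div, cos_zero, sin_zero, one_mul,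
      add_zero] at hre
    simp only [Nat.cast_one, one_mul, hre, mul_zero, zero_add, mul_eq_zero, hsin,
      false_or] at him
    exact ⟨hp, hre, him⟩
  · rintro ⟨hp, hre, him⟩ j -
    exact ⟨hp, by rw [hre, him]; ring⟩
end
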